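/- arXiv:2110.01594 — 2 statements merged into one kernel-verified Lean document; each statement's English description precedes it below -/
import Mathlib

section
/- Let x_1, …, x_T be vectors in ℝ^{np} (viewed as n stacked blocks in ℝ^p), J the block averaging operator, x̄_t the average of the n blocks of x_t, and suppose x̄_{t+1} = x̄_t − α·ḡ_t for vectors ḡ_t and α > 0. Then for all T ≥ 2, ∑_{t=2}^{T} ‖x_t − x_{t−1}‖² ≤ 6·∑_{t=1}^{T} ‖x_t − Jx_t‖² + 3nα²·∑_{t=1}^{T−1} ‖ḡ_t‖². -/
lemma three_sq_aux {E : Type*} [NormedAddCommGroup E] (u v w : E) :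
    ‖u + v + w‖ ^ 2 ≤ 3 * ‖u‖ ^ 2 + 3 * ‖v‖ ^ 2 + 3 * ‖w‖ ^ 2 := by
  have h : ‖u + v + w‖ ≤ ‖u‖ + ‖v‖ + ‖w‖ :=
    le_trans (norm_add_le _ _) (by gcongr; exact norm_add_le _ _)
  nlinarith [norm_nonneg u, norm_nonneg v, norm_nonneg w, norm_nonneg (u + v + w),
    sq_nonneg (‖u‖ - ‖v‖), sq_nonneg (‖v‖ - ‖w‖), sq_nonneg (‖u‖ - ‖w‖)]

/-- Decomposition of successive-iterate differences into consensus errors and average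
descent directions: if the block averages satisfy `x̄_{t+1} = x̄_t − α ḡ_t`, then
`∑_{t=2}^{T} ‖x_t − x_{t−1}‖² ≤ 6 ∑_{t=1}^{T} ‖x_t − Jx_t‖² + 3nα² ∑_{t=1}^{T−1} ‖ḡ_t‖²`,
where all block-vector norms are expanded as sums of block norms. -/
theorem iterate_difference_decomposition (n p : ℕ) (hn : 0 < n) (α : ℝ) (hα : 0 < α)
    (x : ℕ → Fin n → EuclideanSpace ℝ (Fin p))
    (g : ℕ → EuclideanSpace ℝ (Fin p))
    (xbar : ℕ → EuclideanSpace ℝ (Fin p))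
    (hxbar : ∀ t, xbar t = (n : ℝ)⁻¹ • ∑ i, x t i)
    (hrec : ∀ t : ℕ, 1 ≤ t → xbar (t + 1) = xbar t - α • g t) :
    ∀ T : ℕ, 2 ≤ T →
      ∑ t ∈ Finset.Icc 2 T, ∑ i, ‖x t i - x (t - 1) i‖ ^ 2 ≤
        6 * ∑ t ∈ Finset.Icc 1 T, ∑ i, ‖x t i - xbar t‖ ^ 2 +
          3 * n * α ^ 2 * ∑ t ∈ Finset.Icc 1 (T - 1), ‖g t‖ ^ 2 := by
  intro T hT
  set C : ℕ → ℝ := fun t => ∑ i, ‖x t i - xbar t‖ ^ 2 with hC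
  have hCnn : ∀ t, 0 ≤ C t := fun t => Finset.sum_nonneg fun i _ => sq_nonneg _
  -- pointwise step bound
  have step : ∀ t : ℕ, 2 ≤ t →
      ∑ i, ‖x t i - x (t - 1) i‖ ^ 2 ≤
        3 * C t + 3 * C (t - 1) + 3 * n * α ^ 2 * ‖g (t - 1)‖ ^ 2 := by
    intro t ht
    have ht1 : 1 ≤ t - 1 := by omega
    have hrec' : xbar t = xbar (t - 1) - α • g (t - 1) := by
      have := hrec (t - 1) ht1
      rwa [Nat.sub_add_cancel (by omega)] at this
    have hdiff : xbar (t - 1) - xbar t = α • g (t - 1) := by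
      rw [hrec']; abel
    have hnorm : ‖xbar (t - 1) - xbar t‖ ^ 2 = α ^ 2 * ‖g (t - 1)‖ ^ 2 := by
      rw [hdiff, norm_smul, Real.norm_eq_abs, mul_pow, sq_abs]
    calc ∑ i, ‖x t i - x (t - 1) i‖ ^ 2
        ≤ ∑ i, (3 * ‖x t i - xbar t‖ ^ 2 + 3 * ‖xbar t - xbar (t - 1)‖ ^ 2
            + 3 * ‖xbar (t - 1) - x (t - 1) i‖ ^ 2) := by
          apply Finset.sum_le_sum
          intro i _
          have h3 := three_sq_aux (x t i - xbar t) (xbar t - xbar (t - 1))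
            (xbar (t - 1) - x (t - 1) i)
          have heq : x t i - xbar t + (xbar t - xbar (t - 1)) + (xbar (t - 1) - x (t - 1) i)
              = x t i - x (t - 1) i := by abel
          rwa [heq] at h3
      _ = 3 * C t + 3 * n * ‖xbar t - xbar (t - 1)‖ ^ 2 + 3 * C (t - 1) := by
          have : ∀ i : Fin n, ‖xbar (t - 1) - x (t - 1) i‖ = ‖x (t - 1) i - xbar (t - 1)‖ :=
            fun i => norm_sub_rev _ _
          simp only [hC, Finset.sum_add_distrib, ← Finset.mul_sum, Finset.sum_const,
            Finset.card_univ, Fintype.card_fin, nsmul_eq_mul]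
          simp_rw [this]
          ring
      _ = 3 * C t + 3 * C (t - 1) + 3 * n * α ^ 2 * ‖g (t - 1)‖ ^ 2 := by
          rw [norm_sub_rev, hnorm]; ring
  have sum_step : ∑ t ∈ Finset.Icc 2 T, ∑ i, ‖x t i - x (t - 1) i‖ ^ 2 ≤
      ∑ t ∈ Finset.Icc 2 T, (3 * C t + 3 * C (t - 1) + 3 * n * α ^ 2 * ‖g (t - 1)‖ ^ 2) :=
    Finset.sum_le_sum fun t ht => step t (Finset.mem_Icc.mp ht).1
  have reindex : ∀ f : ℕ → ℝ, ∑ t ∈ Finset.Icc 2 T, f (t - 1) = ∑ t ∈ Finset.Icc 1 (T - 1), f t := by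
    intro f
    apply Finset.sum_nbij' (fun t => t - 1) (fun t => t + 1)
    · intro a ha; simp only [Finset.mem_Icc] at *; omega
    · intro a ha; simp only [Finset.mem_Icc] at *; omega
    · intro a ha; simp only [Finset.mem_Icc] at ha; omega
    · intro a ha; simp only [Finset.mem_Icc] at ha; omega
    · intro a _; rfl
  have hsubset1 : ∑ t ∈ Finset.Icc 2 T, C t ≤ ∑ t ∈ Finset.Icc 1 T, C t :=
    Finset.sum_le_sum_of_subset_of_nonneg
      (Finset.Icc_subset_Icc (by omega) le_rfl) (fun t _ _ => hCnn t)
  have hsubset2 : ∑ t ∈ Finset.Icc 1 (T - 1), C t ≤ ∑ t ∈ Finset.Icc 1 T, C t :=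
    Finset.sum_le_sum_of_subset_of_nonneg
      (Finset.Icc_subset_Icc le_rfl (by omega)) (fun t _ _ => hCnn t)
  calc ∑ t ∈ Finset.Icc 2 T, ∑ i, ‖x t i - x (t - 1) i‖ ^ 2
      ≤ ∑ t ∈ Finset.Icc 2 T, (3 * C t + 3 * C (t - 1) + 3 * n * α ^ 2 * ‖g (t - 1)‖ ^ 2) :=
        sum_step
    _ = 3 * ∑ t ∈ Finset.Icc 2 T, C t + 3 * ∑ t ∈ Finset.Icc 2 T, C (t - 1)
        + 3 * n * α ^ 2 * ∑ t ∈ Finset.Icc 2 T, ‖g (t - 1)‖ ^ 2 := by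
        rw [Finset.sum_add_distrib, Finset.sum_add_distrib, ← Finset.mul_sum,
          ← Finset.mul_sum, ← Finset.mul_sum]
    _ = 3 * ∑ t ∈ Finset.Icc 2 T, C t + 3 * ∑ t ∈ Finset.Icc 1 (T - 1), C t
        + 3 * n * α ^ 2 * ∑ t ∈ Finset.Icc 1 (T - 1), ‖g t‖ ^ 2 := by
        rw [reindex C, reindex (fun t => ‖g t‖ ^ 2)]
    _ ≤ 6 * ∑ t ∈ Finset.Icc 1 T, C t + 3 * n * α ^ 2 * ∑ t ∈ Finset.Icc 1 (T - 1), ‖g t‖ ^ 2 := by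
        nlinarith [hsubset1, hsubset2]
end

section
/- Let W ∈ ℝ^{n×n} be doubly stochastic with λ := ‖Wᴷ − J‖ < 1 for the averaging matrix J = (1/n)11ᵀ, and let h be proper, closed, convex, α > 0. If x ∈ ℝ^{np}, y ∈ ℝ^{np} are block vectors and x⁺ := (Wᴷ ⊗ I_p)·P(x − αy), where P applies prox_{αh} block-wise, then ‖x⁺ − Jx⁺‖² ≤ ((1+λ²)/2)·‖x − Jx‖² + (λ²α²(1+λ²)/(1−λ²))·‖y − Jy‖², where J also denotes the block averaging operator ((1/n)11ᵀ) ⊗ I_p. -/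
open scoped Matrix

/-- `z` is the proximal point `prox_{αh}(c)`, i.e. the minimizer of
`u ↦ (1/2)‖u − c‖² + α h(u)`. -/
def IsProxPt {p : ℕ} (α : ℝ) (h : EuclideanSpace ℝ (Fin p) → EReal)
    (c z : EuclideanSpace ℝ (Fin p)) : Prop :=
  ∀ u : EuclideanSpace ℝ (Fin p),
    (((1 : ℝ) / 2 * ‖z - c‖ ^ 2 : ℝ) : EReal) + (α : EReal) * h z ≤
      (((1 : ℝ) / 2 * ‖u - c‖ ^ 2 : ℝ) : EReal) + (α : EReal) * h u

/-! The mixing step fixes consensus vectors, so the deviation of `x⁺` from its average is `Wᴷ − J`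
applied block-wise to the deviation of the proximal points `z = P(x − αy)`, and is shrunk by the
factor `λ`. Since `prox_{αh}` is nonexpansive, `‖zᵢ − zⱼ‖ ≤ ‖cᵢ − cⱼ‖` for `c = x − αy`; as the
deviation from the mean is `1/(2n)` times the sum of all squared pairwise distances, the deviation
of `z` is at most that of `c`. Young's inequality with `η = (1 − λ²)/(2λ²)` then splits
`λ²‖(x − x̄) − α(y − ȳ)‖²` into the two terms of the bound. -/

open Filter Topology
open scoped RealInnerProductSpace
open Finset

section Average

variable {ι E : Type*} [Fintype ι]

section Module

variable [AddCommGroup E] [Module ℝ E]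

noncomputable def avg (v : ι → E) : E := (Fintype.card ι : ℝ)⁻¹ • ∑ i, v i

theorem sum_sub_avg [Nonempty ι] (v : ι → E) : ∑ i, (v i - avg v) = 0 := by
  rw [sum_sub_distrib, sum_const, card_univ, avg, ← Nat.cast_smul_eq_nsmul ℝ, smul_smul,
    mul_inv_cancel₀ (by positivity), one_smul, sub_self]

theorem avg_sub_smul (v w : ι → E) (a : ℝ) :
    avg (fun i => v i - a • w i) = avg v - a • avg w := by
  simp only [avg, sum_sub_distrib, ← smul_sum, smul_sub, smul_comm a]

end Module

variable [NormedAddCommGroup E] [InnerProductSpace ℝ E]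

theorem sum_sum_norm_sub_sq (v : ι → E) :
    ∑ i, ∑ j, ‖v i - v j‖ ^ 2 = 2 * Fintype.card ι * ∑ i, ‖v i‖ ^ 2 - 2 * ‖∑ i, v i‖ ^ 2 := by
  simp only [norm_sub_sq_real, sum_add_distrib, sum_sub_distrib, ← mul_sum, ← inner_sum,
    ← sum_inner, real_inner_self_eq_norm_sq, sum_const, card_univ, nsmul_eq_mul]
  ring

theorem sum_sum_norm_sub_sq_eq_sum_norm_sub_avg_sq (v : ι → E) :
    ∑ i, ∑ j, ‖v i - v j‖ ^ 2 = 2 * Fintype.card ι * ∑ i, ‖v i - avg v‖ ^ 2 := by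
  cases isEmpty_or_nonempty ι
  · simp
  have := sum_sum_norm_sub_sq fun i => v i - avg v
  simpa only [sub_sub_sub_cancel_right, sum_sub_avg, norm_zero, sq, mul_zero, sub_zero] using this

theorem sum_norm_sub_avg_sq_le {u v : ι → E} (huv : ∀ i j, ‖u i - u j‖ ≤ ‖v i - v j‖) :
    ∑ i, ‖u i - avg u‖ ^ 2 ≤ ∑ i, ‖v i - avg v‖ ^ 2 := by
  cases isEmpty_or_nonempty ι
  · simp
  refine le_of_mul_le_mul_left ?_ (by positivity : (0 : ℝ) < 2 * Fintype.card ι)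
  rw [← sum_sum_norm_sub_sq_eq_sum_norm_sub_avg_sq, ← sum_sum_norm_sub_sq_eq_sum_norm_sub_avg_sq]
  gcongr with i _ j _
  exact huv i j

end Average

theorem norm_add_sq_le_of_pos {E : Type*} [SeminormedAddCommGroup E] (a b : E) {η : ℝ}
    (hη : 0 < η) : ‖a + b‖ ^ 2 ≤ (1 + η) * ‖a‖ ^ 2 + (1 + η⁻¹) * ‖b‖ ^ 2 := by
  calc ‖a + b‖ ^ 2 ≤ (‖a‖ + ‖b‖) ^ 2 := by grw [norm_add_le]
    _ = ‖a‖ ^ 2 + ‖b‖ ^ 2 + 2 * ‖a‖ * ‖b‖ := by ring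
    _ ≤ ‖a‖ ^ 2 + ‖b‖ ^ 2 + (η * ‖a‖ ^ 2 + η⁻¹ * ‖b‖ ^ 2) := by
      grw [two_mul_le_add_mul_sq hη]
    _ = (1 + η) * ‖a‖ ^ 2 + (1 + η⁻¹) * ‖b‖ ^ 2 := by ring

theorem mul_norm_sub_smul_sq_le {E : Type*} [SeminormedAddCommGroup E] [NormedSpace ℝ E]
    {q : ℝ} (hq₀ : 0 ≤ q) (hq₁ : q < 1) (α : ℝ) (a b : E) :
    q * ‖a - α • b‖ ^ 2 ≤ (1 + q) / 2 * ‖a‖ ^ 2 + q * α ^ 2 * (1 + q) / (1 - q) * ‖b‖ ^ 2 := by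
  have h1q : 0 < 1 - q := by linarith
  rcases hq₀.eq_or_lt with rfl | hq
  · simp only [zero_mul, zero_div, add_zero]
    positivity
  have := norm_add_sq_le_of_pos a (-(α • b)) (by positivity : 0 < (1 - q) / (2 * q))
  rw [← sub_eq_add_neg, norm_neg, norm_smul, Real.norm_eq_abs, mul_pow, sq_abs] at this
  calc q * ‖a - α • b‖ ^ 2
      ≤ q * ((1 + (1 - q) / (2 * q)) * ‖a‖ ^ 2 +
          (1 + ((1 - q) / (2 * q))⁻¹) * (α ^ 2 * ‖b‖ ^ 2)) := by
        gcongr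
    _ = (1 + q) / 2 * ‖a‖ ^ 2 + q * α ^ 2 * (1 + q) / (1 - q) * ‖b‖ ^ 2 := by
        field_simp
        ring

namespace Matrix

variable {n R : Type*} [Fintype n] [DecidableEq n] [CommSemiring R] {W : Matrix n n R} {v : n → R}

theorem pow_mulVec_of_mulVec_eq (hW : W *ᵥ v = v) (K : ℕ) : W ^ K *ᵥ v = v := by
  induction K with
  | zero => simp
  | succ K ih => rw [pow_succ, ← mulVec_mulVec, hW, ih]

theorem vecMul_pow_of_vecMul_eq (hW : v ᵥ* W = v) (K : ℕ) : v ᵥ* W ^ K = v := by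
  induction K with
  | zero => simp
  | succ K ih => rw [pow_succ, ← vecMul_vecMul, ih, hW]

end Matrix

noncomputable def averagingMatrix (ι : Type*) [Fintype ι] : Matrix ι ι ℝ :=
  Matrix.of fun _ _ => (Fintype.card ι : ℝ)⁻¹

section Mixing

variable {ι κ : Type*} [Fintype ι] [DecidableEq ι] [Fintype κ]

theorem sum_norm_sum_smul_sq_le (M : Matrix ι ι ℝ) (v : ι → EuclideanSpace ℝ κ) :
    ∑ i, ‖∑ j, M i j • v j‖ ^ 2 ≤ ‖Matrix.toEuclideanCLM (𝕜 := ℝ) M‖ ^ 2 * ∑ i, ‖v i‖ ^ 2 := by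
  let col (k : κ) : EuclideanSpace ℝ ι := WithLp.toLp 2 fun j => v j k
  have hM_col (k : κ) :
      ‖Matrix.toEuclideanCLM (𝕜 := ℝ) M (col k)‖ ^ 2 = ∑ i, (∑ j, M i j • v j) k ^ 2 := by
    simp [col, EuclideanSpace.real_norm_sq_eq, Matrix.mulVec, dotProduct]
  calc ∑ i, ‖∑ j, M i j • v j‖ ^ 2 = ∑ k, ‖Matrix.toEuclideanCLM (𝕜 := ℝ) M (col k)‖ ^ 2 := by
        simp only [hM_col, EuclideanSpace.real_norm_sq_eq]
        exact sum_comm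
    _ ≤ ∑ k, (‖Matrix.toEuclideanCLM (𝕜 := ℝ) M‖ * ‖col k‖) ^ 2 := by
        gcongr
        exact ContinuousLinearMap.le_opNorm _ _
    _ = ‖Matrix.toEuclideanCLM (𝕜 := ℝ) M‖ ^ 2 * ∑ i, ‖v i‖ ^ 2 := by
        simp only [mul_pow, ← mul_sum, EuclideanSpace.real_norm_sq_eq]
        rw [sum_comm]

theorem sum_norm_sub_avg_sq_mix_le {M : Matrix ι ι ℝ} (hrow : M *ᵥ 1 = 1) (hcol : 1 ᵥ* M = 1)
    (v : ι → EuclideanSpace ℝ κ) :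
    ∑ i, ‖∑ j, M i j • v j - avg (fun i => ∑ j, M i j • v j)‖ ^ 2 ≤
      ‖Matrix.toEuclideanCLM (𝕜 := ℝ) (M - averagingMatrix ι)‖ ^ 2 * ∑ i, ‖v i - avg v‖ ^ 2 := by
  cases isEmpty_or_nonempty ι
  · simp
  have hrow' (i : ι) : ∑ j, M i j = 1 := by
    simpa [Matrix.mulVec, dotProduct] using congrFun hrow i
  have hcol' (j : ι) : ∑ i, M i j = 1 := by
    simpa [Matrix.vecMul, dotProduct] using congrFun hcol j
  have havg : avg (fun i => ∑ j, M i j • v j) = avg v := by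
    simp only [avg]
    rw [sum_comm]
    simp only [← sum_smul, hcol', one_smul]
  have hdev (i : ι) :
      ∑ j, M i j • v j - avg v = ∑ j, (M - averagingMatrix ι) i j • (v j - avg v) := by
    simp only [averagingMatrix, Matrix.sub_apply, Matrix.of_apply, sub_smul, smul_sub,
      sum_sub_distrib, ← sum_smul, hrow' i, ← smul_sum, one_smul, sum_const, card_univ,
      nsmul_eq_mul, mul_inv_cancel₀ (by positivity : (Fintype.card ι : ℝ) ≠ 0), sub_self, sub_zero]
    rfl
  rw [havg]
  simp only [hdev]
  exact sum_norm_sum_smul_sq_le _ _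

end Mixing

theorem apply_convex_comb_le_coe {E : Type*} [AddCommGroup E] [Module ℝ E] {h : E → EReal}
    (hconv : ∀ x y : E, ∀ a b : ℝ, 0 ≤ a → 0 ≤ b → a + b = 1 →
      h (a • x + b • y) ≤ (a : EReal) * h x + (b : EReal) * h y)
    {x y : E} {r s t : ℝ} (hx : h x ≤ r) (hy : h y ≤ s)
    (ht₀ : 0 ≤ t) (ht₁ : t ≤ 1) :
    h ((1 - t) • x + t • y) ≤ ((1 - t) * r + t * s : ℝ) := by
  refine (hconv x y (1 - t) t (by linarith) ht₀ (by ring)).trans ?_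
  push_cast
  gcongr
  exact EReal.coe_nonneg.2 (by linarith)

namespace IsProxPt

variable {p : ℕ} {α : ℝ} {h : EuclideanSpace ℝ (Fin p) → EReal}

theorem ne_top {c z : EuclideanSpace ℝ (Fin p)} (hz : IsProxPt α h c z) (hα : 0 < α)
    (hproper : ∃ u, h u ≠ ⊤) : h z ≠ ⊤ := by
  obtain ⟨u, hu⟩ := hproper
  intro hztop
  have hle := hz u
  rw [hztop, EReal.coe_mul_top_of_pos hα, EReal.coe_add_top, top_le_iff] at hle
  refine EReal.add_ne_top (EReal.coe_ne_top _) ?_ hle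
  exact (EReal.mul_ne_top _ _).2 ⟨.inl (EReal.coe_ne_bot _), .inl (EReal.coe_nonneg.2 hα.le),
    .inl (EReal.coe_ne_top _), .inr hu⟩

theorem le_of_le_coe {c z : EuclideanSpace ℝ (Fin p)} (hz : IsProxPt α h c z) (hα : 0 < α)
    (hnobot : ∀ u, h u ≠ ⊥)
    {u : EuclideanSpace ℝ (Fin p)} {r : ℝ} (hu : h u ≤ r) :
    1 / 2 * ‖z - c‖ ^ 2 + α * (h z).toReal ≤ 1 / 2 * ‖u - c‖ ^ 2 + α * r := by
  have hz_top := hz.ne_top hα ⟨u, ne_top_of_le_ne_top (EReal.coe_ne_top r) hu⟩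
  have hle := (hz u).trans (add_le_add_right
    (mul_le_mul_of_nonneg_left hu (EReal.coe_nonneg.2 hα.le)) _)
  rw [← EReal.coe_toReal hz_top (hnobot z)] at hle
  exact_mod_cast hle

theorem inner_sub_le {c z w : EuclideanSpace ℝ (Fin p)} (hz : IsProxPt α h c z) (hα : 0 < α)
    (hnobot : ∀ u, h u ≠ ⊥)
    (hconv : ∀ x y : EuclideanSpace ℝ (Fin p), ∀ a b : ℝ, 0 ≤ a → 0 ≤ b → a + b = 1 →
      h (a • x + b • y) ≤ (a : EReal) * h x + (b : EReal) * h y)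
    (hw : h w ≠ ⊤) :
    ⟪c - z, w - z⟫ ≤ α * ((h w).toReal - (h z).toReal) := by
  have hz_top := hz.ne_top hα ⟨w, hw⟩
  have hsegment : ∀ t ∈ Set.Ioo (0 : ℝ) 1,
      ⟪c - z, w - z⟫ ≤ α * ((h w).toReal - (h z).toReal) + t / 2 * ‖w - z‖ ^ 2 := by
    rintro t ⟨ht₀, ht₁⟩
    have hmin := hz.le_of_le_coe hα hnobot (apply_convex_comb_le_coe hconv
      (EReal.le_coe_toReal hz_top) (EReal.le_coe_toReal hw) ht₀.le ht₁.le)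
    have hshift : (1 - t) • z + t • w - c = (z - c) + t • (w - z) := by module
    rw [hshift, norm_add_sq_real, inner_smul_right, norm_smul, Real.norm_of_nonneg ht₀.le,
      mul_pow, ← neg_sub c z, inner_neg_left] at hmin
    refine le_of_mul_le_mul_left ?_ ht₀
    linarith
  have hlim : Tendsto (fun t : ℝ => α * ((h w).toReal - (h z).toReal) + t / 2 * ‖w - z‖ ^ 2)
      (𝓝[>] 0) (𝓝 (α * ((h w).toReal - (h z).toReal))) := by
    refine tendsto_nhdsWithin_of_tendsto_nhds (Continuous.tendsto' ?_ 0 _ (by simp))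
    fun_prop
  exact ge_of_tendsto hlim (eventually_of_mem (Ioo_mem_nhdsGT one_pos) hsegment)

theorem norm_sub_sq_le_inner {c₁ c₂ z₁ z₂ : EuclideanSpace ℝ (Fin p)}
    (hz₁ : IsProxPt α h c₁ z₁) (hz₂ : IsProxPt α h c₂ z₂) (hα : 0 < α)
    (hproper : ∃ u, h u ≠ ⊤) (hnobot : ∀ u, h u ≠ ⊥)
    (hconv : ∀ x y : EuclideanSpace ℝ (Fin p), ∀ a b : ℝ, 0 ≤ a → 0 ≤ b → a + b = 1 →
      h (a • x + b • y) ≤ (a : EReal) * h x + (b : EReal) * h y) :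
    ‖z₁ - z₂‖ ^ 2 ≤ ⟪c₁ - c₂, z₁ - z₂⟫ := by
  have h₁ := hz₁.inner_sub_le hα hnobot hconv (hz₂.ne_top hα hproper)
  have h₂ := hz₂.inner_sub_le hα hnobot hconv (hz₁.ne_top hα hproper)
  have hsum : ⟪c₁ - z₁, z₂ - z₁⟫ + ⟪c₂ - z₂, z₁ - z₂⟫ = ‖z₁ - z₂‖ ^ 2 - ⟪c₁ - c₂, z₁ - z₂⟫ := by
    rw [← real_inner_self_eq_norm_sq]
    simp only [inner_sub_left, inner_sub_right, real_inner_comm]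
    ring
  linarith

theorem norm_sub_le {c₁ c₂ z₁ z₂ : EuclideanSpace ℝ (Fin p)}
    (hz₁ : IsProxPt α h c₁ z₁) (hz₂ : IsProxPt α h c₂ z₂) (hα : 0 < α)
    (hproper : ∃ u, h u ≠ ⊤) (hnobot : ∀ u, h u ≠ ⊥)
    (hconv : ∀ x y : EuclideanSpace ℝ (Fin p), ∀ a b : ℝ, 0 ≤ a → 0 ≤ b → a + b = 1 →
      h (a • x + b • y) ≤ (a : EReal) * h x + (b : EReal) * h y) :
    ‖z₁ - z₂‖ ≤ ‖c₁ - c₂‖ := by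
  have := (hz₁.norm_sub_sq_le_inner hz₂ hα hproper hnobot hconv).trans (real_inner_le_norm _ _)
  nlinarith [norm_nonneg (z₁ - z₂), norm_nonneg (c₁ - c₂)]

end IsProxPt

theorem prox_consensus_contraction_general (n p K : ℕ)
    (W : Matrix (Fin n) (Fin n) ℝ)
    (hrow : W *ᵥ (fun _ => (1 : ℝ)) = fun _ => (1 : ℝ))
    (hcol : (fun _ => (1 : ℝ)) ᵥ* W = fun _ => (1 : ℝ))
    (J : Matrix (Fin n) (Fin n) ℝ) (hJ : J = Matrix.of fun _ _ => (1 : ℝ) / n)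
    (lam : ℝ) (hlam : lam = ‖Matrix.toEuclideanCLM (𝕜 := ℝ) (W ^ K - J)‖)
    (hlam1 : lam < 1)
    (h : EuclideanSpace ℝ (Fin p) → EReal)
    (hproper : ∃ x, h x ≠ ⊤) (hnobot : ∀ x, h x ≠ ⊥)
    (hconv : ∀ x y : EuclideanSpace ℝ (Fin p), ∀ a b : ℝ, 0 ≤ a → 0 ≤ b → a + b = 1 →
      h (a • x + b • y) ≤ (a : EReal) * h x + (b : EReal) * h y)
    (α : ℝ) (hα : 0 < α)
    (x y prx xplus : Fin n → EuclideanSpace ℝ (Fin p))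
    (hprx : ∀ i, IsProxPt α h (x i - α • y i) (prx i))
    (hxplus : ∀ i, xplus i = ∑ j, (W ^ K) i j • prx j)
    (xbar ybar xplusbar : EuclideanSpace ℝ (Fin p))
    (hxbar : xbar = (n : ℝ)⁻¹ • ∑ i, x i)
    (hybar : ybar = (n : ℝ)⁻¹ • ∑ i, y i)
    (hxplusbar : xplusbar = (n : ℝ)⁻¹ • ∑ i, xplus i) :
    ∑ i, ‖xplus i - xplusbar‖ ^ 2 ≤
      (1 + lam ^ 2) / 2 * ∑ i, ‖x i - xbar‖ ^ 2 +
        lam ^ 2 * α ^ 2 * (1 + lam ^ 2) / (1 - lam ^ 2) * ∑ i, ‖y i - ybar‖ ^ 2 := by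
  have havg (v : Fin n → EuclideanSpace ℝ (Fin p)) : (n : ℝ)⁻¹ • ∑ i, v i = avg v := by
    simp [avg]
  rw [havg] at hxbar hybar hxplusbar
  subst hxbar hybar hxplusbar
  obtain rfl : xplus = fun i => ∑ j, (W ^ K) i j • prx j := funext hxplus
  have hJ' : J = averagingMatrix (Fin n) := by simp [hJ, averagingMatrix]
  have hlam0 : 0 ≤ lam := hlam ▸ norm_nonneg _
  calc ∑ i, ‖∑ j, (W ^ K) i j • prx j - avg (fun i => ∑ j, (W ^ K) i j • prx j)‖ ^ 2
      ≤ lam ^ 2 * ∑ i, ‖prx i - avg prx‖ ^ 2 := by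
        rw [hlam, hJ']
        exact sum_norm_sub_avg_sq_mix_le (W.pow_mulVec_of_mulVec_eq hrow K)
          (W.vecMul_pow_of_vecMul_eq hcol K) prx
    _ ≤ lam ^ 2 * ∑ i, ‖(x i - α • y i) - avg (fun i => x i - α • y i)‖ ^ 2 := by
        refine mul_le_mul_of_nonneg_left (sum_norm_sub_avg_sq_le fun i j => ?_) (sq_nonneg _)
        exact (hprx i).norm_sub_le (hprx j) hα hproper hnobot hconv
    _ = ∑ i, lam ^ 2 * ‖(x i - avg x) - α • (y i - avg y)‖ ^ 2 := by
        rw [avg_sub_smul, mul_sum]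
        congr! 4 with i
        module
    _ ≤ _ := by
        rw [mul_sum, mul_sum, ← sum_add_distrib]
        gcongr
        exact mul_norm_sub_smul_sq_le (by positivity) (by nlinarith) _ _ _

/-- One-step consensus contraction for the proximal gradient-tracking update
`x⁺ = (Wᴷ ⊗ I_p) · prox_{αh}(x − αy)` (applied block-wise), where
`λ := ‖Wᴷ − J‖ < 1` is the spectral norm of `Wᴷ − J`:
`‖x⁺ − Jx⁺‖² ≤ ((1+λ²)/2)‖x − Jx‖² + (λ²α²(1+λ²)/(1−λ²))‖y − Jy‖²`,
with block-vector norms expanded as sums of block norms. -/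
theorem prox_consensus_contraction (n p K : ℕ) (hK : 1 ≤ K)
    (W : Matrix (Fin n) (Fin n) ℝ)
    (hnonneg : ∀ i j, 0 ≤ W i j)
    (hrow : W *ᵥ (fun _ => (1 : ℝ)) = fun _ => (1 : ℝ))
    (hcol : (fun _ => (1 : ℝ)) ᵥ* W = fun _ => (1 : ℝ))
    (J : Matrix (Fin n) (Fin n) ℝ) (hJ : J = Matrix.of fun _ _ => (1 : ℝ) / n)
    (lam : ℝ) (hlam : lam = ‖Matrix.toEuclideanCLM (𝕜 := ℝ) (W ^ K - J)‖)
    (hlam1 : lam < 1)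
    (h : EuclideanSpace ℝ (Fin p) → EReal)
    (hproper : ∃ x, h x ≠ ⊤) (hnobot : ∀ x, h x ≠ ⊥)
    (hclosed : LowerSemicontinuous h)
    (hconv : ∀ x y : EuclideanSpace ℝ (Fin p), ∀ a b : ℝ, 0 ≤ a → 0 ≤ b → a + b = 1 →
      h (a • x + b • y) ≤ (a : EReal) * h x + (b : EReal) * h y)
    (α : ℝ) (hα : 0 < α)
    (x y prx xplus : Fin n → EuclideanSpace ℝ (Fin p))
    (hprx : ∀ i, IsProxPt α h (x i - α • y i) (prx i))
    (hxplus : ∀ i, xplus i = ∑ j, (W ^ K) i j • prx j)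
    (xbar ybar xplusbar : EuclideanSpace ℝ (Fin p))
    (hxbar : xbar = (n : ℝ)⁻¹ • ∑ i, x i)
    (hybar : ybar = (n : ℝ)⁻¹ • ∑ i, y i)
    (hxplusbar : xplusbar = (n : ℝ)⁻¹ • ∑ i, xplus i) :
    ∑ i, ‖xplus i - xplusbar‖ ^ 2 ≤
      (1 + lam ^ 2) / 2 * ∑ i, ‖x i - xbar‖ ^ 2 +
        lam ^ 2 * α ^ 2 * (1 + lam ^ 2) / (1 - lam ^ 2) * ∑ i, ‖y i - ybar‖ ^ 2 :=
  prox_consensus_contraction_general n p K W hrow hcol J hJ lam hlam hlam1 h hproper hnobot hconv α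
    hα x y prx xplus hprx hxplus xbar ybar xplusbar hxbar hybar hxplusbar
end
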